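/- Consider a finite deterministic Markov decision process with a constraint set C_x ⊆ S of admissible states and, for each x ∈ C_x, a set C_u(x) ⊆ A of admissible actions. Assume the problem is feasible: for every x ∈ C_x there exists u ∈ C_u(x) with f(x, u) ∈ C_x. Then for every initial state x₀ ∈ C_x there exists a feasible action sequence u : ℕ → A (i.e., one whose trajectory satisfies x(t) ∈ C_x and u(t) ∈ C_u(x(t)) for all t) that attains the infimum of the discounted cost J(x₀, u) over all feasible action sequences. -/
import Mathlib


/-- Trajectory of a deterministic MDP: `x(0) = x₀` and `x(t+1) = f (x t) (u t)`. -/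
def traj {S A : Type*} (f : S → A → S) (x0 : S) (u : ℕ → A) : ℕ → S
  | 0 => x0
  | t + 1 => f (traj f x0 u t) (u t)

/-- Discounted cost of an action sequence from an initial state. -/
noncomputable def Jcost {S A : Type*} (f : S → A → S) (g : S → A → ℝ) (lam : ℝ)
    (x0 : S) (u : ℕ → A) : ℝ :=
  ∑' t : ℕ, lam ^ t * g (traj f x0 u t) (u t)
theorem constrained_optimal_control_exists
    {S A : Type*} [Fintype S] [Nonempty S] [Fintype A] [Nonempty A]
    (f : S → A → S) (g : S → A → ℝ) (lam : ℝ) (hlam0 : 0 < lam) (hlam1 : lam < 1)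
    (Cx : Set S) (Cu : S → Set A)
    (hfeas : ∀ x ∈ Cx, ∃ u ∈ Cu x, f x u ∈ Cx)
    (x0 : S) (hx0 : x0 ∈ Cx) :
    ∃ u : ℕ → A,
      (∀ t : ℕ, traj f x0 u t ∈ Cx ∧ u t ∈ Cu (traj f x0 u t)) ∧
      ∀ u' : ℕ → A,
        (∀ t : ℕ, traj f x0 u' t ∈ Cx ∧ u' t ∈ Cu (traj f x0 u' t)) →
        Jcost f g lam x0 u ≤ Jcost f g lam x0 u' := by
  classical
  letI : TopologicalSpace S := ⊥
  haveI : DiscreteTopology S := ⟨rfl⟩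
  letI : TopologicalSpace A := ⊥
  haveI : DiscreteTopology A := ⟨rfl⟩
  -- continuity of trajectory in u
  have htraj : ∀ t, Continuous fun u : ℕ → A => traj f x0 u t := by
    intro t
    induction t with
    | zero => exact continuous_const
    | succ t ih =>
      have hf : Continuous fun p : S × A => f p.1 p.2 := continuous_of_discreteTopology
      exact hf.comp (ih.prodMk (continuous_apply t))
  -- bound on g
  obtain ⟨p, hp⟩ := Finite.exists_max (fun p : S × A => |g p.1 p.2|)
  set M : ℝ := |g p.1 p.2| with hM
  have hM0 : 0 ≤ M := abs_nonneg _
  -- continuity of Jcost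
  have hJ : Continuous (Jcost f g lam x0) := by
    apply continuous_tsum (u := fun t => M * lam ^ t)
    · intro t
      have hg : Continuous fun q : S × A => g q.1 q.2 := continuous_of_discreteTopology
      exact continuous_const.mul (hg.comp ((htraj t).prodMk (continuous_apply t)))
    · exact (summable_geometric_of_lt_one hlam0.le hlam1).mul_left M
    · intro t u
      rw [Real.norm_eq_abs, abs_mul, abs_pow, abs_of_nonneg hlam0.le, mul_comm]
      exact mul_le_mul_of_nonneg_right (hp (traj f x0 u t, u t)) (pow_nonneg hlam0.le t)
  -- feasible set
  set K : Set (ℕ → A) :=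
    {u | ∀ t : ℕ, traj f x0 u t ∈ Cx ∧ u t ∈ Cu (traj f x0 u t)} with hK
  have hKclosed : IsClosed K := by
    have : K = ⋂ t : ℕ, {u : ℕ → A |
        (traj f x0 u t, u t) ∈ {q : S × A | q.1 ∈ Cx ∧ q.2 ∈ Cu q.1}} := by
      ext u; simp [hK, Set.mem_iInter]
    rw [this]
    exact isClosed_iInter fun t =>
      (isClosed_discrete _).preimage ((htraj t).prodMk (continuous_apply t))
  -- nonemptiness via choice
  choose act hact1 hact2 using hfeas
  let F : {x : S // x ∈ Cx} → {x : S // x ∈ Cx} :=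
    fun x => ⟨f x.1 (act x.1 x.2), hact2 x.1 x.2⟩
  let z : ℕ → {x : S // x ∈ Cx} := fun t => F^[t] ⟨x0, hx0⟩
  let u0 : ℕ → A := fun t => act (z t).1 (z t).2
  have hz : ∀ t, traj f x0 u0 t = (z t).1 := by
    intro t
    induction t with
    | zero => rfl
    | succ t ih =>
      show f (traj f x0 u0 t) (u0 t) = (z (t + 1)).1
      rw [ih]
      have : z (t + 1) = F (z t) := Function.iterate_succ_apply' F t _
      rw [this]
  have hu0K : u0 ∈ K := by
    intro t
    constructor
    · rw [hz t]; exact (z t).2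
    · rw [hz t]; exact hact1 (z t).1 (z t).2
  have hKcomp : IsCompact K := hKclosed.isCompact
  obtain ⟨u, huK, hmin⟩ := hKcomp.exists_isMinOn ⟨u0, hu0K⟩ hJ.continuousOn
  exact ⟨u, huK, fun u' hu' => hmin hu'⟩
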